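/- arXiv:2605.25978 — 3 statements merged into one kernel-verified Lean document; each statement's English description precedes it below -/
import Mathlib

section
/- Let n, N be positive integers, c₀ > 0, let Λ = diag(ω₁², …, ω_n²) with each ω_k > 0, and let C ∈ ℝ^{n×N} have rank n. Define the block matrices A := [[0, I_n], [−c₀² Λ, 0]] ∈ ℝ^{2n×2n} and B := [[0], [c₀² C]] ∈ ℝ^{2n×N}. Then for every λ ∈ ℂ, the 2n × (2n+N) complex matrix [λ I_{2n} − A | B] (obtained by viewing A, B as complex matrices) has rank 2n. -/
/-- Rows of a real matrix of rank `n` (full row rank) are linearly independent. -/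
lemma rows_linearIndependent_of_rank {n N : ℕ}
    (C : Matrix (Fin n) (Fin N) ℝ) (hC : C.rank = n) :
    LinearIndependent ℝ (fun i => C i) := by
  rw [linearIndependent_iff_card_eq_finrank_span]
  have := Matrix.rank_eq_finrank_span_row C
  rw [hC] at this
  rw [Fintype.card_fin]; exact this

/-- Hautus test for the Galerkin projection of the point-actuated wave
equation: if `C` has full row rank `n`, then for every `λ ∈ ℂ` the matrix
`[λI − A | B]` has rank `2n`, where `A = [[0, I], [−c₀²Λ, 0]]` and
`B = [[0], [c₀²C]]` with `Λ = diag(ω²)`. -/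
theorem hautus_rank_condition
    (n N : ℕ) (hn : 0 < n) (hN : 0 < N) (c₀ : ℝ) (hc₀ : 0 < c₀)
    (ω : Fin n → ℝ) (hω : ∀ k, 0 < ω k)
    (C : Matrix (Fin n) (Fin N) ℝ) (hC : C.rank = n)
    (A : Matrix (Fin n ⊕ Fin n) (Fin n ⊕ Fin n) ℝ)
    (hA : A = Matrix.fromBlocks 0 1
      (-(c₀ ^ 2) • Matrix.diagonal fun k => (ω k) ^ 2) 0)
    (B : Matrix (Fin n ⊕ Fin n) (Fin N) ℝ)
    (hB : B = Matrix.of fun i j =>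
      Sum.elim (fun _ => (0 : ℝ)) (fun i' => c₀ ^ 2 * C i' j) i) :
    ∀ lam : ℂ,
      (Matrix.fromCols
        (lam • (1 : Matrix (Fin n ⊕ Fin n) (Fin n ⊕ Fin n) ℂ)
          - A.map Complex.ofReal)
        (B.map Complex.ofReal)).rank = 2 * n := by
  intro lam
  set M1 : Matrix (Fin n ⊕ Fin n) (Fin n ⊕ Fin n) ℂ :=
    lam • (1 : Matrix (Fin n ⊕ Fin n) (Fin n ⊕ Fin n) ℂ) - A.map Complex.ofReal with hM1
  set M : Matrix (Fin n ⊕ Fin n) ((Fin n ⊕ Fin n) ⊕ Fin N) ℂ :=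
    Matrix.fromCols M1 (B.map Complex.ofReal) with hM
  -- linear independence of rows of C over ℝ
  have hCli : LinearIndependent ℝ (fun i => C i) := rows_linearIndependent_of_rank C hC
  have hCvec : Function.Injective C.vecMul := Matrix.vecMul_injective_iff.mpr hCli
  -- key: vecMul by M is injective
  have hinj : Function.Injective M.vecMul := by
    rw [← Matrix.coe_vecMulLinear, ← LinearMap.ker_eq_bot]
    rw [LinearMap.ker_eq_bot']
    intro v hv
    simp only [Matrix.vecMulLinear_apply] at hv
    rw [hM, Matrix.vecMul_fromCols] at hv
    have h1 : Matrix.vecMul v M1 = 0 := by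
      funext j; have := congrFun hv (Sum.inl j); simpa using this
    have h2 : Matrix.vecMul v (B.map Complex.ofReal) = 0 := by
      funext j; have := congrFun hv (Sum.inr j); simpa using this
    -- from h2 : q := v ∘ Sum.inr annihilates C over ℂ
    have hq : (fun i => v (Sum.inr i)) = 0 := by
      have hqC : ∀ j, (∑ i, v (Sum.inr i) * (C i j : ℂ)) = 0 := by
        intro j
        have := congrFun h2 j
        simp only [Matrix.vecMul, dotProduct, Matrix.map_apply, hB,
          Fintype.sum_sum_type, Matrix.of_apply, Sum.elim_inl, Sum.elim_inr,
          Pi.zero_apply, Complex.ofReal_zero, mul_zero, Complex.ofReal_mul,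
          Complex.ofReal_pow, zero_add, Finset.sum_const_zero] at this
        have hc : ((c₀ : ℂ) ^ 2) ≠ 0 := pow_ne_zero 2 (Complex.ofReal_ne_zero.mpr hc₀.ne')
        have : ((c₀ : ℂ) ^ 2) * ∑ i, v (Sum.inr i) * (C i j : ℂ) = 0 := by
          rw [Finset.mul_sum]; rw [← this]; congr 1; ext i; ring
        exact (mul_eq_zero.mp this).resolve_left hc
      have hre : C.vecMul (fun i => (v (Sum.inr i)).re) = 0 := by
        funext j
        have := congrArg Complex.re (hqC j)
        simpa [Matrix.vecMul, dotProduct, Complex.re_sum] using this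
      have him : C.vecMul (fun i => (v (Sum.inr i)).im) = 0 := by
        funext j
        have := congrArg Complex.im (hqC j)
        simpa [Matrix.vecMul, dotProduct, Complex.im_sum] using this
      have hre0 : (fun i => (v (Sum.inr i)).re) = 0 := by
        apply hCvec
        show Matrix.vecMul _ C = Matrix.vecMul 0 C
        rw [Matrix.zero_vecMul]; exact hre
      have him0 : (fun i => (v (Sum.inr i)).im) = 0 := by
        apply hCvec
        show Matrix.vecMul _ C = Matrix.vecMul 0 C
        rw [Matrix.zero_vecMul]; exact him
      funext i
      have h1 := congrFun hre0 i
      have h2 := congrFun him0 i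
      simp only [Pi.zero_apply] at h1 h2 ⊢
      exact Complex.ext h1 h2
    -- from h1 at column inr k : p = 0
    have hq' : ∀ i, v (Sum.inr i) = 0 := fun i => congrFun hq i
    have hp : ∀ k, v (Sum.inl k) = 0 := by
      intro k
      have hM1val : ∀ j : Fin n, M1 (Sum.inl j) (Sum.inr k)
          = -(if j = k then (1 : ℂ) else 0) := by
        intro j
        simp [hM1, hA, Matrix.one_apply, Matrix.map_apply, apply_ite Complex.ofReal]
      have h := congrFun h1 (Sum.inr k)
      have hcalc : Matrix.vecMul v M1 (Sum.inr k) = -(v (Sum.inl k)) := by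
        simp only [Matrix.vecMul, dotProduct, Fintype.sum_sum_type, hq',
          zero_mul, Finset.sum_const_zero, add_zero, hM1val]
        simp [mul_ite, Finset.sum_ite_eq']
      rw [hcalc] at h
      simpa [neg_eq_zero] using h
    funext i
    cases i with
    | inl k => exact hp k
    | inr k => exact congrFun hq k
  -- conclude the rank computation
  have hli : LinearIndependent ℂ (fun i => M i) := Matrix.vecMul_injective_iff.mp hinj
  rw [Matrix.rank_eq_finrank_span_row]
  exact (finrank_span_eq_card hli).trans (by simp [two_mul])
end

section
/- Let k > 0 and let x₁, …, x_n ∈ ℝ³ be pairwise distinct points. Then the functions g_j : S² → ℂ defined on the unit sphere S² ⊂ ℝ³ by g_j(u) := exp(i k ⟨u, x_j⟩), j = 1, …, n, are linearly independent over ℂ (as elements of the complex vector space of functions S² → ℂ). -/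
open Filter Topology Complex RealInnerProductSpace

/-- Key analytic lemma: if a finite combination of "growing exponentials"
`t ↦ exp(bⱼ·r(t) + i·φⱼ(t))` with `r(t) → ∞` vanishes identically and the growth
rates `bⱼ` are injective on the index set, then all coefficients vanish. -/
private lemma exp_sum_aux {n : ℕ} (b : Fin n → ℝ) (φ : Fin n → ℝ → ℝ)
    (r : ℝ → ℝ) (hr : Tendsto r atTop atTop) (c : Fin n → ℂ) :
    ∀ S : Finset (Fin n),
      (∀ t : ℝ, ∑ j ∈ S, c j * Complex.exp (((b j * r t : ℝ) : ℂ) + Complex.I * ((φ j t : ℝ) : ℂ)) = 0) →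
      ∀ j ∈ S, (∀ i ∈ S, ∀ i' ∈ S, b i = b i' → i = i') → c j = 0 := by
  intro S
  induction S using Finset.strongInduction with
  | _ S ih =>
    intro h j hj hinj
    rcases Finset.exists_max_image S b ⟨j, hj⟩ with ⟨j0, hj0, hmax⟩
    -- the renormalized sum
    set g : ℝ → ℂ := fun t => ∑ i ∈ S,
      c i * Complex.exp ((((b i - b j0) * r t : ℝ) : ℂ) + Complex.I * ((φ i t - φ j0 t : ℝ) : ℂ)) with hg
    have hg0 : ∀ t, g t = 0 := by
      intro t
      have := h t
      have : (∑ i ∈ S, c i * Complex.exp (((b i * r t : ℝ) : ℂ) + Complex.I * ((φ i t : ℝ) : ℂ)))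
          * Complex.exp (-(((b j0 * r t : ℝ) : ℂ) + Complex.I * ((φ j0 t : ℝ) : ℂ))) = 0 := by
        rw [this, zero_mul]
      rw [Finset.sum_mul] at this
      rw [hg, ← this]
      refine Finset.sum_congr rfl fun i hi => ?_
      rw [mul_assoc, ← Complex.exp_add]
      congr 1
      push_cast
      ring_nf
    have hgsplit : ∀ t, g t = c j0 + ∑ i ∈ S.erase j0,
        c i * Complex.exp ((((b i - b j0) * r t : ℝ) : ℂ) + Complex.I * ((φ i t - φ j0 t : ℝ) : ℂ)) := by
      intro t
      rw [hg]
      show (∑ i ∈ S,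
        c i * Complex.exp ((((b i - b j0) * r t : ℝ) : ℂ) + Complex.I * ((φ i t - φ j0 t : ℝ) : ℂ))) = _
      rw [← Finset.add_sum_erase S _ hj0]
      congr 1
      simp
    have hlim : Tendsto g atTop (𝓝 (c j0)) := by
      have : Tendsto (fun t => ∑ i ∈ S.erase j0,
          c i * Complex.exp ((((b i - b j0) * r t : ℝ) : ℂ) + Complex.I * ((φ i t - φ j0 t : ℝ) : ℂ)))
          atTop (𝓝 0) := by
        have hterm : ∀ i ∈ S.erase j0, Tendsto (fun t =>
            c i * Complex.exp ((((b i - b j0) * r t : ℝ) : ℂ) + Complex.I * ((φ i t - φ j0 t : ℝ) : ℂ)))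
            atTop (𝓝 0) := by
          intro i hi
          have hblt : b i - b j0 < 0 := by
            have hne : i ≠ j0 := Finset.ne_of_mem_erase hi
            have hle : b i ≤ b j0 := hmax i (Finset.mem_of_mem_erase hi)
            have : b i ≠ b j0 := fun hEq => hne (hinj i (Finset.mem_of_mem_erase hi) j0 hj0 hEq)
            have := lt_of_le_of_ne hle this
            linarith
          rw [tendsto_zero_iff_norm_tendsto_zero]
          have hnorm : ∀ t, ‖c i * Complex.exp ((((b i - b j0) * r t : ℝ) : ℂ)
              + Complex.I * ((φ i t - φ j0 t : ℝ) : ℂ))‖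
              = ‖c i‖ * Real.exp ((b i - b j0) * r t) := by
            intro t
            rw [norm_mul, Complex.norm_exp]
            congr 2
            simp [Complex.add_re, Complex.ofReal_re, Complex.mul_re]
          simp only [hnorm]
          have hbot : Tendsto (fun t => (b i - b j0) * r t) atTop atBot :=
            hr.const_mul_atTop_of_neg hblt
          have := (Real.tendsto_exp_atBot.comp hbot).const_mul ‖c i‖
          simpa using this
        have := tendsto_finset_sum (S.erase j0) hterm
        simpa using this
      have := this.const_add (c j0)
      simpa only [add_zero, ← hgsplit] using this.congr (fun t => (hgsplit t).symm)
    have hcj0 : c j0 = 0 := by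
      have h0 : Tendsto g atTop (𝓝 0) := by
        rw [show g = fun _ => (0:ℂ) from funext hg0]
        exact tendsto_const_nhds
      exact (tendsto_nhds_unique hlim h0)
    by_cases hjj : j = j0
    · rw [hjj]; exact hcj0
    · -- apply IH on S.erase j0
      have hrest : ∀ t : ℝ, ∑ i ∈ S.erase j0,
          c i * Complex.exp (((b i * r t : ℝ) : ℂ) + Complex.I * ((φ i t : ℝ) : ℂ)) = 0 := by
        intro t
        have := h t
        rw [← Finset.add_sum_erase S _ hj0, hcj0, zero_mul, zero_add] at this
        exact this
      exact ih (S.erase j0) (Finset.erase_ssubset hj0) hrest j (Finset.mem_erase.mpr ⟨hjj, hj⟩)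
        (fun i hi i' hi' => hinj i (Finset.mem_of_mem_erase hi) i' (Finset.mem_of_mem_erase hi'))

/-- Existence of a generic direction separating the inner products with
the pairwise distinct points. -/
private lemma exists_generic {n : ℕ} (x : Fin n → EuclideanSpace ℝ (Fin 3))
    (hx : Function.Injective x) :
    ∃ v : EuclideanSpace ℝ (Fin 3), v ≠ 0 ∧ ∀ i j, i ≠ j → ⟪v, x i⟫ ≠ ⟪v, x j⟫ := by
  classical
  set ι := Option {p : Fin n × Fin n // p.1 ≠ p.2}
  have : Finite ι := by infer_instance
  set p : ι → Subspace ℝ (EuclideanSpace ℝ (Fin 3)) := fun o => match o with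
    | none => ⊥
    | some ⟨(i, j), _⟩ => LinearMap.ker (innerSL ℝ (x i - x j) : EuclideanSpace ℝ (Fin 3) →ₗ[ℝ] ℝ)
  have hne : ∀ o, p o ≠ ⊤ := by
    rintro (_ | ⟨⟨i, j⟩, hij⟩)
    · simp only [p]
      exact bot_ne_top
    · intro htop
      have hy : x i - x j ≠ 0 := sub_ne_zero.mpr (fun h => hij (hx h))
      have : (x i - x j) ∈ LinearMap.ker (innerSL ℝ (x i - x j) : EuclideanSpace ℝ (Fin 3) →ₗ[ℝ] ℝ) := by
        have : p (some ⟨(i, j), hij⟩) = ⊤ := htop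
        simp only [p] at this
        rw [this]; exact Submodule.mem_top
      rw [LinearMap.mem_ker] at this
      simp only [ContinuousLinearMap.coe_coe, innerSL_apply_apply] at this
      exact hy (inner_self_eq_zero.mp this)
  have hcover : ⋃ o, (p o : Set (EuclideanSpace ℝ (Fin 3))) ≠ Set.univ := by
    intro hcov
    obtain ⟨o, ho⟩ := Subspace.exists_eq_top_of_iUnion_eq_univ hcov
    exact hne o ho
  obtain ⟨v, hv⟩ := Set.ne_univ_iff_exists_notMem _ |>.mp hcover
  rw [Set.mem_iUnion] at hv
  push_neg at hv
  refine ⟨v, ?_, ?_⟩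
  · have := hv none
    simpa [p] using this
  · intro i j hij hEq
    have := hv (some ⟨(i, j), hij⟩)
    apply this
    show v ∈ LinearMap.ker (innerSL ℝ (x i - x j) : EuclideanSpace ℝ (Fin 3) →ₗ[ℝ] ℝ)
    rw [LinearMap.mem_ker]
    simp only [ContinuousLinearMap.coe_coe, innerSL_apply_apply]
    rw [inner_sub_left]
    rw [real_inner_comm (x i) v, real_inner_comm (x j) v] at hEq
    rw [hEq]; ring

/-- An orthonormal pair where the second vector is a positive multiple of a
prescribed nonzero vector. -/
private lemma exists_ortho (v : EuclideanSpace ℝ (Fin 3)) (hv : v ≠ 0) :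
    ∃ e1 e2 : EuclideanSpace ℝ (Fin 3), ‖e1‖ = 1 ∧ ‖e2‖ = 1 ∧ ⟪e1, e2⟫ = 0 ∧
      ∃ cpos : ℝ, 0 < cpos ∧ ∀ y : EuclideanSpace ℝ (Fin 3), ⟪e2, y⟫ = cpos * ⟪v, y⟫ := by
  have hvn : (0:ℝ) < ‖v‖ := norm_pos_iff.mpr hv
  set e2 : EuclideanSpace ℝ (Fin 3) := ‖v‖⁻¹ • v with he2
  have he2n : ‖e2‖ = 1 := by
    rw [he2, norm_smul]
    simp [abs_of_pos (inv_pos.mpr hvn), inv_mul_cancel₀ hvn.ne']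
  have hspan_ne_top : (ℝ ∙ e2) ≠ ⊤ := by
    intro h
    have h1 : Module.finrank ℝ (ℝ ∙ e2) = 3 := by
      rw [h]
      simp [finrank_euclideanSpace]
    have h2 : Module.finrank ℝ (ℝ ∙ e2) ≤ 1 := finrank_span_le_card _ |>.trans (by simp)
    omega
  have : (ℝ ∙ e2)ᗮ ≠ ⊥ := by
    intro h
    exact hspan_ne_top (Submodule.orthogonal_eq_bot_iff.mp h)
  obtain ⟨w, hw, hw0⟩ := Submodule.ne_bot_iff _ |>.mp this
  have hwn : (0:ℝ) < ‖w‖ := norm_pos_iff.mpr hw0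
  refine ⟨‖w‖⁻¹ • w, e2, ?_, he2n, ?_, ‖v‖⁻¹, inv_pos.mpr hvn, ?_⟩
  · rw [norm_smul]; simp [abs_of_pos (inv_pos.mpr hwn), inv_mul_cancel₀ hwn.ne']
  · rw [real_inner_smul_left]
    have : ⟪e2, w⟫ = 0 := hw e2 (Submodule.mem_span_singleton_self e2)
    rw [real_inner_comm] at this
    rw [this, mul_zero]
  · intro y
    rw [he2, real_inner_smul_left]

/-- Linear independence of spherical plane-wave patterns: for `k > 0` and
pairwise distinct `x₁,…,x_n ∈ ℝ³`, the functions
`u ↦ exp(i k ⟨u, x_j⟩)` on the unit sphere `S²` are linearly independent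
over `ℂ`. -/
theorem plane_wave_patterns_linearIndependent
    (n : ℕ) (k : ℝ) (hk : 0 < k)
    (x : Fin n → EuclideanSpace ℝ (Fin 3)) (hx : Function.Injective x) :
    LinearIndependent ℂ (fun j : Fin n =>
      fun u : Metric.sphere (0 : EuclideanSpace ℝ (Fin 3)) 1 =>
        Complex.exp (Complex.I * (k : ℂ) *
          ((inner ℝ ((u : Metric.sphere (0 : EuclideanSpace ℝ (Fin 3)) 1) :
              EuclideanSpace ℝ (Fin 3)) (x j) : ℝ) : ℂ))) := by
  rw [Fintype.linearIndependent_iff]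
  intro c hc
  obtain ⟨v, hv0, hvdist⟩ := exists_generic x hx
  obtain ⟨e1, e2, he1, he2, h12, cpos, hcpos, hce2⟩ := exists_ortho v hv0
  set a : Fin n → ℝ := fun j => ⟪e1, x j⟫ with ha
  set b : Fin n → ℝ := fun j => ⟪e2, x j⟫ with hb
  have hbinj : Function.Injective b := by
    intro i j hEq
    by_contra hij
    apply hvdist i j hij
    have : cpos * ⟪v, x i⟫ = cpos * ⟪v, x j⟫ := by
      rw [← hce2 (x i), ← hce2 (x j)]; exact hEq
    exact mul_left_cancel₀ hcpos.ne' this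
  -- the great circle
  have hcirc : ∀ θ : ℝ, (Real.cos θ • e1 + Real.sin θ • e2) ∈
      Metric.sphere (0 : EuclideanSpace ℝ (Fin 3)) 1 := by
    intro θ
    rw [mem_sphere_zero_iff_norm]
    have h := norm_add_sq_real (Real.cos θ • e1) (Real.sin θ • e2)
    have h1 : ‖Real.cos θ • e1 + Real.sin θ • e2‖ ^ 2 = 1 := by
      rw [h, norm_smul, norm_smul, real_inner_smul_left, real_inner_smul_right, h12]
      simp [he1, he2, mul_pow, sq_abs]
    nlinarith [norm_nonneg (Real.cos θ • e1 + Real.sin θ • e2)]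
  -- evaluate the vanishing combination on the great circle
  have heval : ∀ θ : ℝ, ∑ j, c j * Complex.exp (Complex.I * (k : ℂ) *
      ((Real.cos θ * a j + Real.sin θ * b j : ℝ) : ℂ)) = 0 := by
    intro θ
    have := congrFun hc ⟨_, hcirc θ⟩
    simp only [Finset.sum_apply, Pi.smul_apply, smul_eq_mul, Pi.zero_apply] at this
    rw [← this]
    refine Finset.sum_congr rfl fun j _ => ?_
    congr 2
    have : ⟪(Real.cos θ • e1 + Real.sin θ • e2 : EuclideanSpace ℝ (Fin 3)), x j⟫
        = Real.cos θ * a j + Real.sin θ * b j := by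
      rw [inner_add_left, real_inner_smul_left, real_inner_smul_left, ha, hb]
    rw [this]
  -- the entire extension
  set F : ℂ → ℂ := fun z => ∑ j, c j * Complex.exp (Complex.I * (k : ℂ)
    * (Complex.cos z * (a j : ℂ) + Complex.sin z * (b j : ℂ))) with hF
  have hFdiff : Differentiable ℂ F := by
    rw [hF]; fun_prop
  have hFreal : ∀ θ : ℝ, F θ = 0 := by
    intro θ
    rw [hF]
    rw [← heval θ]
    refine Finset.sum_congr rfl fun j _ => ?_
    congr 2
    push_cast
    ring
  -- identity theorem: F vanishes everywhere
  have hFzero : ∀ z : ℂ, F z = 0 := by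
    have han : AnalyticOnNhd ℂ F Set.univ :=
      hFdiff.differentiableOn.analyticOnNhd isOpen_univ
    have hfreq : ∃ᶠ w in 𝓝[≠] (0 : ℂ), F w = 0 := by
      have htend : Tendsto (fun m : ℕ => (((m + 1 : ℝ)⁻¹ : ℝ) : ℂ)) atTop (𝓝[≠] (0 : ℂ)) := by
        rw [tendsto_nhdsWithin_iff]
        constructor
        · have : Tendsto (fun m : ℕ => ((m + 1 : ℝ))⁻¹) atTop (𝓝 0) :=
            tendsto_one_div_add_atTop_nhds_zero_nat.congr (by intro m; rw [one_div])
          have h2 := (Complex.continuous_ofReal.tendsto 0).comp this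
          simpa [Function.comp_def] using h2
        · filter_upwards with m
          simp only [Set.mem_compl_iff, Set.mem_singleton_iff]
          intro hEq
          have h1 : ((m + 1 : ℝ))⁻¹ = 0 := by exact_mod_cast hEq
          have h2 : (m + 1 : ℝ) ≠ 0 := by positivity
          simp_all
      exact htend.frequently (Frequently.of_forall fun m => hFreal _)
    intro z
    exact han.eqOn_zero_of_preconnected_of_frequently_eq_zero isPreconnected_univ
      (Set.mem_univ 0) hfreq (Set.mem_univ z)
  -- evaluate along the imaginary axis and apply the growth lemma
  have key : ∀ t : ℝ, ∑ j, c j * Complex.exp (((b j * (k * Real.sinh t) : ℝ) : ℂ)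
      + Complex.I * ((a j * (k * Real.cosh t) : ℝ) : ℂ)) = 0 := by
    intro t
    have := hFzero (((-t : ℝ) : ℂ) * Complex.I)
    rw [hF] at this
    rw [← this]
    refine Finset.sum_congr rfl fun j _ => ?_
    congr 1
    congr 1
    rw [Complex.cos_mul_I, Complex.sin_mul_I, Complex.ofReal_neg, Complex.cosh_neg,
      Complex.sinh_neg]
    push_cast
    linear_combination ((k : ℂ) * Complex.sinh (t : ℂ) * (b j : ℂ)) * Complex.I_sq
  have hr : Tendsto (fun t : ℝ => k * Real.sinh t) atTop atTop := by
    apply Tendsto.const_mul_atTop hk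
    exact Real.sinh_strictMono.monotone.tendsto_atTop_atTop
      (fun y => ⟨Real.arsinh y, (Real.sinh_arsinh y).ge⟩)
  intro j
  refine exp_sum_aux b (fun j t => a j * (k * Real.cosh t)) (fun t => k * Real.sinh t) hr c
    Finset.univ (fun t => ?_) j (Finset.mem_univ j)
    (fun i _ i' _ hEq => hbinj hEq)
  exact key t
end

section
/- Let M be a positive integer, and for 1 ≤ i, j ≤ M let ω_i > 0, q_{ij} ∈ ℝ with q_{ii} = 0, and τ_{ij} > 0 for i ≠ j. Define D(x) := diag(ω_i^{-2} x² + 1)_{i=1}^M and Q(x) := (q_{ij} e^{−x τ_{ij}})_{i,j=1}^M for x ∈ ℝ. Then det(D(x) + x² Q(x)) / ∏_{i=1}^M (ω_i^{-2} x² + 1) → 1 as x → +∞ along the real axis. -/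
/-! Dividing row `i` of `D(x) + x² Q(x)` by the Minnaert factor `dᵢ(x) = ωᵢ⁻² x² + 1 ≥ 1` turns the
quotient into `det (diag(d(x))⁻¹ (D(x) + x² Q(x)))`. The diagonal entries of this matrix are `1`
because `qᵢᵢ = 0`, and the off-diagonal ones are bounded by `|qᵢⱼ| x² e^{-x τᵢⱼ} → 0`, so the matrix
tends to `1` and its determinant to `1` by continuity. -/

open Filter Topology Matrix

theorem Matrix.det_diagonal_inv_mul {ι 𝕜 : Type*} [Fintype ι] [DecidableEq ι] [Field 𝕜]
    (d : ι → 𝕜) (A : Matrix ι ι 𝕜) : (diagonal d⁻¹ * A).det = A.det / ∏ i, d i := by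
  rw [det_mul, det_diagonal, div_eq_inv_mul, ← Finset.prod_inv_distrib]
  rfl

theorem tendsto_det_div_prod_of_tendsto_diagonal_inv_mul {α ι 𝕜 : Type*} [Fintype ι]
    [DecidableEq ι] [Field 𝕜] [TopologicalSpace 𝕜] [IsTopologicalRing 𝕜] {l : Filter α}
    {A : α → Matrix ι ι 𝕜} {d : α → ι → 𝕜}
    (h : Tendsto (fun x => diagonal (d x)⁻¹ * A x) l (𝓝 1)) :
    Tendsto (fun x => (A x).det / ∏ i, d x i) l (𝓝 1) := by
  have hdet := ((continuous_id.matrix_det).tendsto (1 : Matrix ι ι 𝕜)).comp h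
  simpa only [Function.comp_def, id, det_one, det_diagonal_inv_mul] using hdet

theorem Real.tendsto_sq_mul_exp_neg_mul_atTop {τ : ℝ} (hτ : 0 < τ) :
    Tendsto (fun x : ℝ => x ^ 2 * Real.exp (-x * τ)) atTop (𝓝 0) := by
  refine (tendsto_rpow_mul_exp_neg_mul_atTop_nhds_zero 2 τ hτ).congr fun x => ?_
  rw [Real.rpow_two, neg_mul_comm, mul_comm τ]

theorem tendsto_inv_mul_sq_add_one_mul_delayed_coupling {c τ : ℝ} (hc : 0 ≤ c) (hτ : 0 < τ)
    (q : ℝ) :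
    Tendsto (fun x : ℝ => (c * x ^ 2 + 1)⁻¹ * (x ^ 2 * (q * Real.exp (-x * τ)))) atTop (𝓝 0) := by
  have hbound := (Real.tendsto_sq_mul_exp_neg_mul_atTop hτ).const_mul |q|
  rw [mul_zero] at hbound
  refine squeeze_zero_norm (fun x => ?_) hbound
  have hinv : (c * x ^ 2 + 1)⁻¹ ≤ 1 := inv_le_one_of_one_le₀ (by nlinarith [sq_nonneg x])
  have hinv_nonneg : 0 ≤ (c * x ^ 2 + 1)⁻¹ := inv_nonneg.2 (by positivity)
  calc ‖(c * x ^ 2 + 1)⁻¹ * (x ^ 2 * (q * Real.exp (-x * τ)))‖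
      = (c * x ^ 2 + 1)⁻¹ * (|q| * (x ^ 2 * Real.exp (-x * τ))) := by
        rw [Real.norm_eq_abs, abs_mul, abs_of_nonneg hinv_nonneg, abs_mul, abs_mul,
          abs_of_nonneg (sq_nonneg x), abs_of_pos (Real.exp_pos _)]
        ring
    _ ≤ |q| * (x ^ 2 * Real.exp (-x * τ)) :=
        mul_le_of_le_one_left (by positivity) hinv

theorem characteristic_determinant_asymptotic_general
    (M : ℕ)
    (ω : Fin M → ℝ)
    (q : Fin M → Fin M → ℝ) (hqdiag : ∀ i, q i i = 0)
    (τ : Fin M → Fin M → ℝ) (hτ : ∀ i j, i ≠ j → 0 < τ i j) :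
    Filter.Tendsto (fun x : ℝ =>
      (Matrix.diagonal (fun i => (ω i)⁻¹ ^ 2 * x ^ 2 + 1) +
        x ^ 2 • Matrix.of (fun i j => q i j * Real.exp (-x * τ i j))).det /
        ∏ i, ((ω i)⁻¹ ^ 2 * x ^ 2 + 1))
      Filter.atTop (nhds 1) := by
  refine tendsto_det_div_prod_of_tendsto_diagonal_inv_mul ?_
  refine tendsto_pi_nhds.2 fun i => tendsto_pi_nhds.2 fun j => ?_
  simp only [diagonal_mul, Pi.inv_apply, Matrix.add_apply, Matrix.smul_apply, of_apply,
    smul_eq_mul]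
  rcases eq_or_ne i j with rfl | hij
  · refine tendsto_const_nhds.congr fun x => ?_
    have hd : (ω i)⁻¹ ^ 2 * x ^ 2 + 1 ≠ 0 := by positivity
    rw [diagonal_apply_eq, hqdiag, zero_mul, mul_zero, add_zero, inv_mul_cancel₀ hd, one_apply_eq]
  · simpa [diagonal_apply_ne _ hij, one_apply_ne hij] using
      tendsto_inv_mul_sq_add_one_mul_delayed_coupling (sq_nonneg (ω i)⁻¹) (hτ i j hij) (q i j)

/-- Along the positive real axis, the characteristic determinant of the
delayed bubble interaction pencil is asymptotic to the product of the
diagonal Minnaert factors: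
`det(D(x) + x² Q(x)) / ∏ᵢ (ωᵢ⁻² x² + 1) → 1` as `x → +∞`. -/
theorem characteristic_determinant_asymptotic
    (M : ℕ) (hM : 0 < M)
    (ω : Fin M → ℝ) (hω : ∀ i, 0 < ω i)
    (q : Fin M → Fin M → ℝ) (hqdiag : ∀ i, q i i = 0)
    (τ : Fin M → Fin M → ℝ) (hτ : ∀ i j, i ≠ j → 0 < τ i j) :
    Filter.Tendsto (fun x : ℝ =>
      (Matrix.diagonal (fun i => (ω i)⁻¹ ^ 2 * x ^ 2 + 1) +
        x ^ 2 • Matrix.of (fun i j => q i j * Real.exp (-x * τ i j))).det /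
        ∏ i, ((ω i)⁻¹ ^ 2 * x ^ 2 + 1))
      Filter.atTop (nhds 1) :=
  characteristic_determinant_asymptotic_general M ω q hqdiag τ hτ
end
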